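/- arXiv:2510.17216 — 3 statements merged into one kernel-verified Lean document; each statement's English description precedes it below -/
import Mathlib

section
/- Let (A ♯_σ^× H, β ⊗ α) be a Radford [(m,k),m]-biproduct monoidal Hom-bialgebra with σ convolution invertible. Define φ^r: (A ⊗ H) ⊗ H → A ⊗ H by φ^r((a ⊗ h) ⊗ l) = a σ(α^{k+1}(h₁), α^{k+1−m}(l₁)) ⊗ α(h₂)α^{1−m}(l₂), and σ̄: H ⊗ H → A ⊗ H by σ̄(h ⊗ l) = σ(α^{k+1−m}(h), α^{k+1−m}(l)) ⊗ 1_H. Then (A ♯_σ^× H, β ⊗ α, φ^r) is a right (H, α, σ̄)-Hom module: φ^r(φ^r(x ⊗ l) ⊗ α(g)) = (β ⊗ α)(x) · φ^r(σ̄(l₁, g₁) ⊗ l₂g₂) and φ^r(x ⊗ 1_H) = (β ⊗ α)(x) for all l, g ∈ H and x ∈ A ⊗ H. -/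
open TensorProduct

noncomputable section

/-- A monoidal Hom-algebra `(A, β)`. -/
structure HomAlgebraStr (K : Type*) (A : Type*) [Field K] [AddCommGroup A] [Module K A] where
  mul : A →ₗ[K] A →ₗ[K] A
  one : A
  str : A ≃ₗ[K] A
  hom_assoc : ∀ a b c : A, mul (str a) (mul b c) = mul (mul a b) (str c)
  str_mul : ∀ a b : A, str (mul a b) = mul (str a) (str b)
  mul_one : ∀ a : A, mul a one = str a
  one_mul : ∀ a : A, mul one a = str a
  str_one : str one = one

/-- A monoidal Hom-coalgebra `(C, γ)`. -/
structure HomCoalgebraStr (K : Type*) (C : Type*) [Field K] [AddCommGroup C] [Module K C] where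
  comul : C →ₗ[K] C ⊗[K] C
  counit : C →ₗ[K] K
  str : C ≃ₗ[K] C
  hom_coassoc : ∀ c : C,
    TensorProduct.map str.symm.toLinearMap comul (comul c)
      = TensorProduct.assoc K C C C (TensorProduct.map comul str.symm.toLinearMap (comul c))
  comul_str : ∀ c : C, comul (str c) = TensorProduct.map str.toLinearMap str.toLinearMap (comul c)
  counit_comul_left : ∀ c : C,
    TensorProduct.lid K C (TensorProduct.map counit (LinearMap.id : C →ₗ[K] C) (comul c)) = str.symm c
  counit_comul_right : ∀ c : C,
    TensorProduct.rid K C (TensorProduct.map (LinearMap.id : C →ₗ[K] C) counit (comul c)) = str.symm c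
  counit_str : ∀ c : C, counit (str c) = counit c

/-- The componentwise multiplication on `N ⊗ N` induced by a bilinear multiplication on `N`. -/
def tensorSquareMul {K N : Type*} [Field K] [AddCommGroup N] [Module K N]
    (mul : N →ₗ[K] N →ₗ[K] N) :
    (N ⊗[K] N) →ₗ[K] (N ⊗[K] N) →ₗ[K] (N ⊗[K] N) :=
  TensorProduct.curry
    ((TensorProduct.map (TensorProduct.lift mul) (TensorProduct.lift mul)) ∘ₗ
      (TensorProduct.tensorTensorTensorComm K N N N N).toLinearMap)

/-- A monoidal Hom-bialgebra `(H, α)`. -/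
structure HomBialgebraStr (K : Type*) (H : Type*) [Field K] [AddCommGroup H] [Module K H]
    extends HomAlgebraStr K H where
  comul : H →ₗ[K] H ⊗[K] H
  counit : H →ₗ[K] K
  hom_coassoc : ∀ c : H,
    TensorProduct.map str.symm.toLinearMap comul (comul c)
      = TensorProduct.assoc K H H H (TensorProduct.map comul str.symm.toLinearMap (comul c))
  comul_str : ∀ c : H, comul (str c) = TensorProduct.map str.toLinearMap str.toLinearMap (comul c)
  counit_comul_left : ∀ c : H,
    TensorProduct.lid K H (TensorProduct.map counit (LinearMap.id : H →ₗ[K] H) (comul c)) = str.symm c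
  counit_comul_right : ∀ c : H,
    TensorProduct.rid K H (TensorProduct.map (LinearMap.id : H →ₗ[K] H) counit (comul c)) = str.symm c
  counit_str : ∀ c : H, counit (str c) = counit c
  comul_mul : ∀ a b : H, comul (mul a b) = tensorSquareMul mul (comul a) (comul b)
  comul_one : comul one = one ⊗ₜ[K] one
  counit_mul : ∀ a b : H, counit (mul a b) = counit a * counit b
  counit_one : counit one = 1

/-- A monoidal Hom-Hopf algebra `(H, α, S)`. -/
structure HomHopfStr (K : Type*) (H : Type*) [Field K] [AddCommGroup H] [Module K H]
    extends HomBialgebraStr K H where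
  antipode : H →ₗ[K] H
  antipode_str : ∀ h : H, antipode (str h) = str (antipode h)
  antipode_mul_left : ∀ h : H,
    TensorProduct.lift (mul ∘ₗ antipode) (comul h) = counit h • one
  antipode_mul_right : ∀ h : H,
    TensorProduct.lift (mul.compl₂ antipode) (comul h) = counit h • one

section Defs

variable {K H A C M : Type*} [Field K]
variable [AddCommGroup H] [Module K H] [AddCommGroup A] [Module K A]
variable [AddCommGroup C] [Module K C] [AddCommGroup M] [Module K M]

/-- `(A, β)` is a left weak `(H, α)`-Hom-module algebra via `act`:
`h·(ab) = (h₁·a)(h₂·b)` and `h·1 = ε(h)1`. -/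
structure IsWeakModuleAlgebra (HB : HomBialgebraStr K H) (AA : HomAlgebraStr K A)
    (act : H →ₗ[K] A →ₗ[K] A) : Prop where
  act_mul : ∀ (h : H) (a b : A),
    act h (AA.mul a b)
      = TensorProduct.lift AA.mul
          (TensorProduct.map (TensorProduct.lift act) (TensorProduct.lift act)
            (TensorProduct.map ((TensorProduct.mk K H A).flip a) ((TensorProduct.mk K H A).flip b)
              (HB.comul h)))
  act_one : ∀ h : H, act h AA.one = HB.counit h • AA.one

/-- `(C, β)` is a left `(H, α)`-Hom-comodule coalgebra via `coact a = a₍₋₁₎ ⊗ a₍₀₎`. -/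
structure IsComoduleCoalgebra (HB : HomBialgebraStr K H) (CC : HomCoalgebraStr K C)
    (coact : C →ₗ[K] H ⊗[K] C) : Prop where
  comodule_coassoc : ∀ c : C,
    TensorProduct.assoc K H H C
        (TensorProduct.map HB.comul CC.str.symm.toLinearMap (coact c))
      = TensorProduct.map HB.str.symm.toLinearMap coact (coact c)
  coact_str : ∀ c : C,
    coact (CC.str c) = TensorProduct.map HB.str.toLinearMap CC.str.toLinearMap (coact c)
  counit_coact : ∀ c : C,
    TensorProduct.lid K C (TensorProduct.map HB.counit (LinearMap.id : C →ₗ[K] C) (coact c))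
      = CC.str.symm c
  coact_comul : ∀ c : C,
    TensorProduct.map (LinearMap.id : H →ₗ[K] H) CC.comul (coact c)
      = TensorProduct.map (TensorProduct.lift HB.mul) (LinearMap.id : C ⊗[K] C →ₗ[K] C ⊗[K] C)
          (TensorProduct.tensorTensorTensorComm K H C H C
            (TensorProduct.map coact coact (CC.comul c)))
  counit_coact_one : ∀ c : C,
    TensorProduct.rid K H (TensorProduct.map (LinearMap.id : H →ₗ[K] H) CC.counit (coact c))
      = CC.counit c • HB.one

/-- The `(m,k)`-Hom-crossed product multiplication on simple tensors:
`(a ♯ h)(b ♯ g) = a[(α^m(h₁₁)·β⁻²(b)) σ(α^{k+1}(h₁₂), α^k(g₁))] ♯ α(h₂g₂)`. -/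
def cpMulElem (HB : HomBialgebraStr K H) (AA : HomAlgebraStr K A)
    (act : H →ₗ[K] A →ₗ[K] A) (σ : H →ₗ[K] H →ₗ[K] A) (m k : ℤ)
    (a : A) (h : H) (b : A) (g : H) : A ⊗[K] H :=
  TensorProduct.map
    ((AA.mul a) ∘ₗ TensorProduct.lift AA.mul ∘ₗ
      TensorProduct.map
        ((act.flip ((AA.str ^ (-2 : ℤ)) b)) ∘ₗ (HB.str ^ m).toLinearMap)
        (TensorProduct.lift σ ∘ₗ
          TensorProduct.map (HB.str ^ (k+1)).toLinearMap (HB.str ^ k).toLinearMap) ∘ₗ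
      (TensorProduct.assoc K H H H).toLinearMap)
    (HB.str.toLinearMap ∘ₗ TensorProduct.lift HB.mul)
    (TensorProduct.map (TensorProduct.map HB.comul (LinearMap.id : H →ₗ[K] H))
      (LinearMap.id : H ⊗[K] H →ₗ[K] H ⊗[K] H)
      (TensorProduct.tensorTensorTensorComm K H H H H (HB.comul h ⊗ₜ[K] HB.comul g)))

/-- The `m`-Hom-smash product multiplication on simple tensors:
`(a ♯ h)(b ♯ g) = a(α^m(h₁)·β⁻¹(b)) ♯ α(h₂)g`. -/
def smashMulElem (HB : HomBialgebraStr K H) (AA : HomAlgebraStr K A)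
    (act : H →ₗ[K] A →ₗ[K] A) (m : ℤ) (a : A) (h : H) (b : A) (g : H) : A ⊗[K] H :=
  TensorProduct.map
    ((AA.mul a) ∘ₗ (act.flip ((AA.str ^ (-1 : ℤ)) b)) ∘ₗ (HB.str ^ m).toLinearMap)
    ((HB.mul.flip g) ∘ₗ HB.str.toLinearMap)
    (HB.comul h)

/-- The `m`-Hom-smash coproduct comultiplication on simple tensors:
`Δ(a ⋊ h) = (a₁ ⋊ α^m(a₂₍₋₁₎)α⁻¹(h₁)) ⊗ (β(a₂₍₀₎) ⋊ h₂)`. -/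
def scComulElem (HB : HomBialgebraStr K H) (AC : HomCoalgebraStr K A)
    (coact : A →ₗ[K] H ⊗[K] A) (m : ℤ) (a : A) (h : H) :
    (A ⊗[K] H) ⊗[K] (A ⊗[K] H) :=
  TensorProduct.map
    (TensorProduct.map (LinearMap.id : A →ₗ[K] A)
        (TensorProduct.lift HB.mul ∘ₗ
          TensorProduct.map (HB.str ^ m).toLinearMap (HB.str ^ (-1 : ℤ)).toLinearMap) ∘ₗ
      (TensorProduct.assoc K A H H).toLinearMap)
    (TensorProduct.map AC.str.toLinearMap (LinearMap.id : H →ₗ[K] H))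
    (TensorProduct.tensorTensorTensorComm K (A ⊗[K] H) A H H
      ((TensorProduct.assoc K A H A).symm
          (TensorProduct.map (LinearMap.id : A →ₗ[K] A) coact (AC.comul a)) ⊗ₜ[K] HB.comul h))

/-- Condition (1) of Theorem 2.3. -/
def CPCond1 (HB : HomBialgebraStr K H) (AA : HomAlgebraStr K A)
    (σ : H →ₗ[K] H →ₗ[K] A) : Prop :=
  (∀ h : H, σ h HB.one = HB.counit h • AA.one) ∧
  (∀ h : H, σ HB.one h = HB.counit h • AA.one) ∧
  (∀ h g : H, σ (HB.str h) (HB.str g) = AA.str (σ h g))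

/-- Condition (2) of Theorem 2.3:
`[α^m(h₁l₁)·a] σ(α^{k+2}(h₂), α^{k+2}(l₂)) = σ(α^{k+2}(h₁), α^{k+2}(l₁)) [α^m(h₂l₂)·a]`. -/
def CPCond2 (HB : HomBialgebraStr K H) (AA : HomAlgebraStr K A)
    (act : H →ₗ[K] A →ₗ[K] A) (σ : H →ₗ[K] H →ₗ[K] A) (m k : ℤ) : Prop :=
  ∀ (h l : H) (a : A),
    TensorProduct.lift AA.mul
      (TensorProduct.map
        ((act.flip a) ∘ₗ (HB.str ^ m).toLinearMap ∘ₗ TensorProduct.lift HB.mul)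
        (TensorProduct.lift σ ∘ₗ
          TensorProduct.map (HB.str ^ (k+2)).toLinearMap (HB.str ^ (k+2)).toLinearMap)
        (TensorProduct.tensorTensorTensorComm K H H H H (HB.comul h ⊗ₜ[K] HB.comul l)))
    =
    TensorProduct.lift AA.mul
      (TensorProduct.map
        (TensorProduct.lift σ ∘ₗ
          TensorProduct.map (HB.str ^ (k+2)).toLinearMap (HB.str ^ (k+2)).toLinearMap)
        ((act.flip a) ∘ₗ (HB.str ^ m).toLinearMap ∘ₗ TensorProduct.lift HB.mul)
        (TensorProduct.tensorTensorTensorComm K H H H H (HB.comul h ⊗ₜ[K] HB.comul l)))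

/-- Condition (3) of Theorem 2.3:
`[α^{m+1}(h₁)·σ(α^{k+1}(l₁), α^{k+1}(g₁))] σ(α^{k+2}(h₂), α^{k+1}(l₂g₂))
  = σ(α^{k+2}(h₁), α^{k+2}(l₁)) σ(α^{k+1}(h₂l₂), α^{k+1}(g))`. -/
def CPCond3 (HB : HomBialgebraStr K H) (AA : HomAlgebraStr K A)
    (act : H →ₗ[K] A →ₗ[K] A) (σ : H →ₗ[K] H →ₗ[K] A) (m k : ℤ) : Prop :=
  ∀ h l g : H,
    TensorProduct.lift AA.mul
      (TensorProduct.map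
        (TensorProduct.lift act ∘ₗ
          TensorProduct.map (HB.str ^ (m+1)).toLinearMap
            (TensorProduct.lift σ ∘ₗ
              TensorProduct.map (HB.str ^ (k+1)).toLinearMap (HB.str ^ (k+1)).toLinearMap))
        (TensorProduct.lift σ ∘ₗ
          TensorProduct.map (HB.str ^ (k+2)).toLinearMap
            ((HB.str ^ (k+1)).toLinearMap ∘ₗ TensorProduct.lift HB.mul))
        (TensorProduct.tensorTensorTensorComm K H H (H ⊗[K] H) (H ⊗[K] H)
          (HB.comul h ⊗ₜ[K]
            (TensorProduct.tensorTensorTensorComm K H H H H (HB.comul l ⊗ₜ[K] HB.comul g)))))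
    =
    TensorProduct.lift AA.mul
      (TensorProduct.map
        (TensorProduct.lift σ ∘ₗ
          TensorProduct.map (HB.str ^ (k+2)).toLinearMap (HB.str ^ (k+2)).toLinearMap)
        ((σ.flip ((HB.str ^ (k+1)) g)) ∘ₗ (HB.str ^ (k+1)).toLinearMap ∘ₗ TensorProduct.lift HB.mul)
        (TensorProduct.tensorTensorTensorComm K H H H H (HB.comul h ⊗ₜ[K] HB.comul l)))

/-- `σ` is a twisted comodule cocycle:
`β(a₁) ⊗ α^{m+1}(a₂₍₋₁₎)g ⊗ a₂₍₀₎
  = a₁σ(α^{k+m+2}(a₂₍₋₁₎₁), α^{k+1}(g₁)) ⊗ α^{m+2}(a₂₍₋₁₎₂)α(g₂) ⊗ a₂₍₀₎`. -/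
def IsTwistedCocycle (HB : HomBialgebraStr K H) (AA : HomAlgebraStr K A)
    (AC : HomCoalgebraStr K A) (coact : A →ₗ[K] H ⊗[K] A)
    (σ : H →ₗ[K] H →ₗ[K] A) (m k : ℤ) : Prop :=
  ∀ (a : A) (g : H),
    (TensorProduct.assoc K A H A).symm
      (TensorProduct.map AA.str.toLinearMap
        (TensorProduct.map ((HB.mul.flip g) ∘ₗ (HB.str ^ (m+1)).toLinearMap)
          (LinearMap.id : A →ₗ[K] A))
        (TensorProduct.map (LinearMap.id : A →ₗ[K] A) coact (AC.comul a)))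
    =
    TensorProduct.map
      (TensorProduct.map (TensorProduct.lift AA.mul) (LinearMap.id : H →ₗ[K] H)
        ∘ₗ (TensorProduct.assoc K A A H).symm.toLinearMap
        ∘ₗ TensorProduct.map (LinearMap.id : A →ₗ[K] A)
            (TensorProduct.map
              (TensorProduct.lift σ ∘ₗ
                TensorProduct.map (HB.str ^ (k+m+2)).toLinearMap (HB.str ^ (k+1)).toLinearMap)
              (TensorProduct.lift HB.mul ∘ₗ
                TensorProduct.map (HB.str ^ (m+2)).toLinearMap HB.str.toLinearMap)
            ∘ₗ (TensorProduct.tensorTensorTensorComm K H H H H).toLinearMap)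
        ∘ₗ (TensorProduct.assoc K A (H ⊗[K] H) (H ⊗[K] H)).toLinearMap)
      (LinearMap.id : A →ₗ[K] A)
      ((TensorProduct.assoc K (A ⊗[K] (H ⊗[K] H)) (H ⊗[K] H) A).symm
        (TensorProduct.map (LinearMap.id : A ⊗[K] (H ⊗[K] H) →ₗ[K] A ⊗[K] (H ⊗[K] H))
          (TensorProduct.comm K A (H ⊗[K] H)).toLinearMap
          (TensorProduct.assoc K (A ⊗[K] (H ⊗[K] H)) A (H ⊗[K] H)
            ((TensorProduct.assoc K A (H ⊗[K] H) A).symm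
                (TensorProduct.map (LinearMap.id : A →ₗ[K] A)
                  (TensorProduct.map HB.comul (LinearMap.id : A →ₗ[K] A))
                  (TensorProduct.map (LinearMap.id : A →ₗ[K] A) coact (AC.comul a)))
              ⊗ₜ[K] HB.comul g))))

/-- Auxiliary map `(n ⊗ w) ⊗ t ↦ (α^j(n)·t) ⊗ f(w)` on `(H ⊗ M) ⊗ H`. -/
def coactMulAux (HB : HomBialgebraStr K H) (j : ℤ) (f : M →ₗ[K] M) :
    (H ⊗[K] M) ⊗[K] H →ₗ[K] H ⊗[K] M :=
  TensorProduct.map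
      (TensorProduct.lift HB.mul ∘ₗ
        TensorProduct.map (HB.str ^ j).toLinearMap (LinearMap.id : H →ₗ[K] H)) f
    ∘ₗ (TensorProduct.assoc K H H M).symm.toLinearMap
    ∘ₗ TensorProduct.map (LinearMap.id : H →ₗ[K] H) (TensorProduct.comm K M H).toLinearMap
    ∘ₗ (TensorProduct.assoc K H M H).toLinearMap

/-- (A1): `ε_A` is an algebra map. -/
def CondA1 (AA : HomAlgebraStr K A) (AC : HomCoalgebraStr K A) : Prop :=
  (∀ a b : A, AC.counit (AA.mul a b) = AC.counit a * AC.counit b) ∧ AC.counit AA.one = 1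

/-- (A2): `ε_A(h·a) = ε_H(h)ε_A(a)`. -/
def CondA2 (HB : HomBialgebraStr K H) (AC : HomCoalgebraStr K A)
    (act : H →ₗ[K] A →ₗ[K] A) : Prop :=
  ∀ (h : H) (a : A), AC.counit (act h a) = HB.counit h * AC.counit a

/-- (A3): `σ` is a coalgebra map. -/
def CondA3 (HB : HomBialgebraStr K H) (AC : HomCoalgebraStr K A)
    (σ : H →ₗ[K] H →ₗ[K] A) : Prop :=
  (∀ h g : H,
    AC.comul (σ h g)
      = TensorProduct.map (TensorProduct.lift σ) (TensorProduct.lift σ)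
          (TensorProduct.tensorTensorTensorComm K H H H H (HB.comul h ⊗ₜ[K] HB.comul g))) ∧
  (∀ h g : H, AC.counit (σ h g) = HB.counit h * HB.counit g)

/-- (A4): `Δ_A(1_A) = 1_A ⊗ 1_A`. -/
def CondA4 (AA : HomAlgebraStr K A) (AC : HomCoalgebraStr K A) : Prop :=
  AC.comul AA.one = AA.one ⊗ₜ[K] AA.one

/-- (A5): the coaction is an algebra map. -/
def CondA5 (HB : HomBialgebraStr K H) (AA : HomAlgebraStr K A)
    (coact : A →ₗ[K] H ⊗[K] A) : Prop :=
  (∀ a b : A,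
    coact (AA.mul a b)
      = TensorProduct.map (TensorProduct.lift HB.mul) (TensorProduct.lift AA.mul)
          (TensorProduct.tensorTensorTensorComm K H A H A (coact a ⊗ₜ[K] coact b))) ∧
  coact AA.one = HB.one ⊗ₜ[K] AA.one

/-- (A6). -/
def CondA6 (HB : HomBialgebraStr K H) (coact : A →ₗ[K] H ⊗[K] A)
    (σ : H →ₗ[K] H →ₗ[K] A) (m k : ℤ) : Prop :=
  ∀ h g : H,
    coactMulAux HB (m-1) (LinearMap.id : A →ₗ[K] A)
      (TensorProduct.map
        (coact ∘ₗ TensorProduct.lift σ ∘ₗ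
          TensorProduct.map (HB.str ^ (k+2)).toLinearMap (HB.str ^ (k+2)).toLinearMap)
        ((HB.str ^ (-1 : ℤ)).toLinearMap ∘ₗ TensorProduct.lift HB.mul)
        (TensorProduct.tensorTensorTensorComm K H H H H (HB.comul h ⊗ₜ[K] HB.comul g)))
    =
    TensorProduct.map (TensorProduct.lift HB.mul)
      (TensorProduct.lift σ ∘ₗ
        TensorProduct.map (HB.str ^ (k+1)).toLinearMap (HB.str ^ (k+1)).toLinearMap)
      (TensorProduct.tensorTensorTensorComm K H H H H (HB.comul h ⊗ₜ[K] HB.comul g))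

/-- (A7). -/
def CondA7 (HB : HomBialgebraStr K H) (AA : HomAlgebraStr K A) (AC : HomCoalgebraStr K A)
    (act : H →ₗ[K] A →ₗ[K] A) (coact : A →ₗ[K] H ⊗[K] A)
    (σ : H →ₗ[K] H →ₗ[K] A) (m k : ℤ) : Prop :=
  ∀ a b : A,
    AC.comul (AA.mul a b) =
      TensorProduct.map
        (TensorProduct.lift AA.mul
          ∘ₗ TensorProduct.map (LinearMap.id : A →ₗ[K] A)
              (TensorProduct.lift AA.mul
                ∘ₗ TensorProduct.map
                    (TensorProduct.lift act ∘ₗ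
                      TensorProduct.map (HB.str ^ (2*m)).toLinearMap (AA.str ^ (-2 : ℤ)).toLinearMap)
                    (TensorProduct.lift σ ∘ₗ
                      TensorProduct.map (HB.str ^ (k+m+1)).toLinearMap (HB.str ^ (k+m)).toLinearMap)
                ∘ₗ (TensorProduct.tensorTensorTensorComm K H H A H).toLinearMap)
          ∘ₗ (TensorProduct.assoc K A (H ⊗[K] H) (A ⊗[K] H)).toLinearMap)
        (AA.str.toLinearMap ∘ₗ TensorProduct.lift AA.mul)
        (TensorProduct.tensorTensorTensorComm K (A ⊗[K] (H ⊗[K] H)) A (A ⊗[K] H) A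
          ((TensorProduct.assoc K A (H ⊗[K] H) A).symm
              (TensorProduct.map (LinearMap.id : A →ₗ[K] A)
                (TensorProduct.map HB.comul (LinearMap.id : A →ₗ[K] A))
                (TensorProduct.map (LinearMap.id : A →ₗ[K] A) coact (AC.comul a)))
            ⊗ₜ[K]
            (TensorProduct.assoc K A H A).symm
              (TensorProduct.map (LinearMap.id : A →ₗ[K] A) coact (AC.comul b))))

/-- (A8). -/
def CondA8 (HB : HomBialgebraStr K H) (AA : HomAlgebraStr K A) (AC : HomCoalgebraStr K A)
    (act : H →ₗ[K] A →ₗ[K] A) (coact : A →ₗ[K] H ⊗[K] A)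
    (σ : H →ₗ[K] H →ₗ[K] A) (m k : ℤ) : Prop :=
  ∀ (h : H) (b : A),
    AC.comul (act ((HB.str ^ m) h) b) =
      TensorProduct.map
        (TensorProduct.lift AA.mul
          ∘ₗ TensorProduct.map
              (TensorProduct.lift act ∘ₗ
                TensorProduct.map (HB.str ^ m).toLinearMap (AA.str ^ (-1 : ℤ)).toLinearMap)
              (TensorProduct.lift σ ∘ₗ
                TensorProduct.map (HB.str ^ (k+1)).toLinearMap (HB.str ^ (k+m+1)).toLinearMap)
          ∘ₗ (TensorProduct.tensorTensorTensorComm K H H A H).toLinearMap)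
        (TensorProduct.lift act ∘ₗ
          TensorProduct.map (HB.str ^ m).toLinearMap AA.str.toLinearMap)
        (TensorProduct.tensorTensorTensorComm K (H ⊗[K] H) H (A ⊗[K] H) A
          (TensorProduct.map HB.comul (LinearMap.id : H →ₗ[K] H) (HB.comul h)
            ⊗ₜ[K]
            (TensorProduct.assoc K A H A).symm
              (TensorProduct.map (LinearMap.id : A →ₗ[K] A) coact (AC.comul b))))

/-- (A9). -/
def CondA9 (HB : HomBialgebraStr K H) (act : H →ₗ[K] A →ₗ[K] A)
    (coact : A →ₗ[K] H ⊗[K] A) (m : ℤ) : Prop :=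
  ∀ (h : H) (b : A),
    coactMulAux HB (m-1) (LinearMap.id : A →ₗ[K] A)
      (TensorProduct.map (coact ∘ₗ (act.flip b) ∘ₗ (HB.str ^ (m+1)).toLinearMap)
        (LinearMap.id : H →ₗ[K] H) (HB.comul h))
    =
    TensorProduct.map
      (TensorProduct.lift HB.mul ∘ₗ
        TensorProduct.map (LinearMap.id : H →ₗ[K] H) (HB.str ^ m).toLinearMap)
      (TensorProduct.lift act ∘ₗ
        TensorProduct.map (HB.str ^ m).toLinearMap (LinearMap.id : A →ₗ[K] A))
      (TensorProduct.tensorTensorTensorComm K H H H A (HB.comul h ⊗ₜ[K] coact b))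

/-- The Radford `[(m,k),m]`-biproduct structure on `A ⊗ H`. -/
structure IsRadfordBiproduct (HB : HomBialgebraStr K H) (AA : HomAlgebraStr K A)
    (AC : HomCoalgebraStr K A) (act : H →ₗ[K] A →ₗ[K] A) (coact : A →ₗ[K] H ⊗[K] A)
    (σ : H →ₗ[K] H →ₗ[K] A) (m k : ℤ) (B : HomBialgebraStr K (A ⊗[K] H)) : Prop where
  mul_def : ∀ (a : A) (h : H) (b : A) (g : H),
    B.mul (a ⊗ₜ[K] h) (b ⊗ₜ[K] g) = cpMulElem HB AA act σ m k a h b g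
  one_def : B.one = AA.one ⊗ₜ[K] HB.one
  comul_def : ∀ (a : A) (h : H), B.comul (a ⊗ₜ[K] h) = scComulElem HB AC coact m a h
  counit_def : ∀ (a : A) (h : H), B.counit (a ⊗ₜ[K] h) = AC.counit a * HB.counit h
  str_def : B.str = TensorProduct.congr AA.str HB.str

/-- `S_H` is a `σ`-antipode for `(H, α)`. -/
structure IsSigmaAntipode (HB : HomBialgebraStr K H) (AA : HomAlgebraStr K A)
    (σ : H →ₗ[K] H →ₗ[K] A) (S : H →ₗ[K] H) : Prop where
  antipode_str : ∀ h : H, S (HB.str h) = HB.str (S h)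
  right : ∀ h : H,
    TensorProduct.map (TensorProduct.lift σ) (TensorProduct.lift HB.mul)
        (TensorProduct.tensorTensorTensorComm K H H H H
          (TensorProduct.map HB.comul (HB.comul ∘ₗ S) (HB.comul h)))
      = HB.counit h • (AA.one ⊗ₜ[K] HB.one)
  left : ∀ h : H,
    TensorProduct.map (TensorProduct.lift σ) (TensorProduct.lift HB.mul)
        (TensorProduct.tensorTensorTensorComm K H H H H
          (TensorProduct.map (HB.comul ∘ₗ S) HB.comul (HB.comul h)))
      = HB.counit h • (AA.one ⊗ₜ[K] HB.one)

/-- `S_A` is a convolution inverse of `id_A`. -/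
def IsConvInvOfId (AA : HomAlgebraStr K A) (AC : HomCoalgebraStr K A)
    (SA : A →ₗ[K] A) : Prop :=
  (∀ a : A, TensorProduct.lift (AA.mul ∘ₗ SA) (AC.comul a) = AC.counit a • AA.one) ∧
  (∀ a : A, TensorProduct.lift (AA.mul.compl₂ SA) (AC.comul a) = AC.counit a • AA.one)

/-- `σ` and `σinv` are convolution inverses of each other. -/
def IsConvInvPair (HB : HomBialgebraStr K H) (AA : HomAlgebraStr K A)
    (σ σinv : H →ₗ[K] H →ₗ[K] A) : Prop :=
  (∀ h g : H,
    TensorProduct.lift AA.mul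
      (TensorProduct.map (TensorProduct.lift σ) (TensorProduct.lift σinv)
        (TensorProduct.tensorTensorTensorComm K H H H H (HB.comul h ⊗ₜ[K] HB.comul g)))
    = (HB.counit h * HB.counit g) • AA.one) ∧
  (∀ h g : H,
    TensorProduct.lift AA.mul
      (TensorProduct.map (TensorProduct.lift σinv) (TensorProduct.lift σ)
        (TensorProduct.tensorTensorTensorComm K H H H H (HB.comul h ⊗ₜ[K] HB.comul g)))
    = (HB.counit h * HB.counit g) • AA.one)

/-- The Radford antipode formula
`S(a ⊗ h) = (1_A ⊗ S_H(α^{m−1}(a₍₋₁₎)α⁻²(h)))·(S_A(a₍₀₎) ⊗ 1_H)`. -/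
def radfordAntipodeElem (HB : HomBialgebraStr K H) (AA : HomAlgebraStr K A)
    (coact : A →ₗ[K] H ⊗[K] A)
    (Bmul : (A ⊗[K] H) →ₗ[K] (A ⊗[K] H) →ₗ[K] (A ⊗[K] H))
    (SH : H →ₗ[K] H) (SA : A →ₗ[K] A) (m : ℤ) (a : A) (h : H) : A ⊗[K] H :=
  TensorProduct.lift Bmul
    (TensorProduct.map
      ((TensorProduct.mk K A H AA.one) ∘ₗ SH ∘ₗ (HB.mul.flip ((HB.str ^ (-2 : ℤ)) h)) ∘ₗ
        (HB.str ^ (m - 1)).toLinearMap)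
      (((TensorProduct.mk K A H).flip HB.one) ∘ₗ SA)
      (coact a))

/-- `φ^l(l ⊗ (a ⊗ h)) = (α(l₁₁)·β⁻¹(a)) σ(α^{k+2−m}(l₁₂), α^{k+1}(h₁)) ⊗ α^{1−m}(l₂)α(h₂)`. -/
def philElem (HB : HomBialgebraStr K H) (AA : HomAlgebraStr K A)
    (act : H →ₗ[K] A →ₗ[K] A) (σ : H →ₗ[K] H →ₗ[K] A) (m k : ℤ)
    (l : H) (a : A) (h : H) : A ⊗[K] H :=
  TensorProduct.map
    (TensorProduct.lift AA.mul ∘ₗ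
      TensorProduct.map ((act.flip ((AA.str ^ (-1 : ℤ)) a)) ∘ₗ HB.str.toLinearMap)
        (TensorProduct.lift σ ∘ₗ
          TensorProduct.map (HB.str ^ (k+2-m)).toLinearMap (HB.str ^ (k+1)).toLinearMap) ∘ₗ
      (TensorProduct.assoc K H H H).toLinearMap)
    (TensorProduct.lift HB.mul ∘ₗ
      TensorProduct.map (HB.str ^ (1-m)).toLinearMap HB.str.toLinearMap)
    (TensorProduct.map (TensorProduct.map HB.comul (LinearMap.id : H →ₗ[K] H))
      (LinearMap.id : H ⊗[K] H →ₗ[K] H ⊗[K] H)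
      (TensorProduct.tensorTensorTensorComm K H H H H (HB.comul l ⊗ₜ[K] HB.comul h)))

/-- `φ^r((a ⊗ h) ⊗ l) = a σ(α^{k+1}(h₁), α^{k+1−m}(l₁)) ⊗ α(h₂)α^{1−m}(l₂)`. -/
def phirElem (HB : HomBialgebraStr K H) (AA : HomAlgebraStr K A)
    (σ : H →ₗ[K] H →ₗ[K] A) (m k : ℤ) (a : A) (h : H) (l : H) : A ⊗[K] H :=
  TensorProduct.map
    ((AA.mul a) ∘ₗ TensorProduct.lift σ ∘ₗ
      TensorProduct.map (HB.str ^ (k+1)).toLinearMap (HB.str ^ (k+1-m)).toLinearMap)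
    (TensorProduct.lift HB.mul ∘ₗ
      TensorProduct.map HB.str.toLinearMap (HB.str ^ (1-m)).toLinearMap)
    (TensorProduct.tensorTensorTensorComm K H H H H (HB.comul h ⊗ₜ[K] HB.comul l))

/-- `(M, μ, φ)` is a left `(H, α, σ̄)`-Hom module. -/
def IsLeftSigmaHomModule (HB : HomBialgebraStr K H)
    (mulM : M →ₗ[K] M →ₗ[K] M) (strM : M →ₗ[K] M)
    (σbar : H →ₗ[K] H →ₗ[K] M) (φ : H →ₗ[K] M →ₗ[K] M) : Prop :=
  (∀ (g l : H) (x : M),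
    φ (HB.str g) (φ l x)
      = TensorProduct.lift mulM
          (TensorProduct.map (strM ∘ₗ TensorProduct.lift σbar)
            ((φ.flip x) ∘ₗ TensorProduct.lift HB.mul)
            (TensorProduct.tensorTensorTensorComm K H H H H (HB.comul g ⊗ₜ[K] HB.comul l))))
  ∧ (∀ x : M, φ HB.one x = strM x)

/-- `(M, μ, φ)` is a right `(H, α, σ̄)`-Hom module. -/
def IsRightSigmaHomModule (HB : HomBialgebraStr K H)
    (mulM : M →ₗ[K] M →ₗ[K] M) (strM : M →ₗ[K] M)
    (σbar : H →ₗ[K] H →ₗ[K] M) (φ : M →ₗ[K] H →ₗ[K] M) : Prop :=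
  (∀ (x : M) (l g : H),
    φ (φ x l) (HB.str g)
      = mulM (strM x)
          (TensorProduct.lift φ
            (TensorProduct.map (TensorProduct.lift σbar) (TensorProduct.lift HB.mul)
              (TensorProduct.tensorTensorTensorComm K H H H H (HB.comul l ⊗ₜ[K] HB.comul g)))))
  ∧ (∀ x : M, φ x HB.one = strM x)

/-- `(M, μ, φ⁺, φ⁻)` is a weak `(H, α)` Hom-bimodule. -/
def IsWeakHomBimodule (HB : HomBialgebraStr K H) (strM : M →ₗ[K] M)
    (φl : H →ₗ[K] M →ₗ[K] M) (φr : M →ₗ[K] H →ₗ[K] M) : Prop :=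
  (∀ x : M, φl HB.one x = strM x) ∧ (∀ x : M, φr x HB.one = strM x) ∧
  (∀ (h : H) (x : M) (g : H), φl (HB.str h) (φr x g) = φr (φl h x) (HB.str g))

/-- A weak `m`-Hom admissible mapping system `C ⇄ A ⇄ H`. -/
structure WeakAdmissibleSystem (HB : HomBialgebraStr K H)
    (CA : HomAlgebraStr K C) (CC : HomCoalgebraStr K C)
    (coact : C →ₗ[K] H ⊗[K] C) (m : ℤ) (AB : HomBialgebraStr K A)
    (j : C →ₗ[K] A) (p : A →ₗ[K] C) (i : H →ₗ[K] A) (π : A →ₗ[K] H) : Prop where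
  c_str_eq : CA.str = CC.str
  p_j : ∀ c : C, p (j c) = c
  pi_i : ∀ h : H, π (i h) = h
  pi_mul : ∀ a b : A, π (AB.mul a b) = HB.mul (π a) (π b)
  pi_one : π AB.one = HB.one
  pi_str : ∀ a : A, π (AB.str a) = HB.str (π a)
  pi_comul : ∀ a : A, TensorProduct.map π π (AB.comul a) = HB.comul (π a)
  pi_counit : ∀ a : A, HB.counit (π a) = AB.counit a
  i_one : i HB.one = AB.one
  i_str : ∀ h : H, i (HB.str h) = AB.str (i h)
  i_comul : ∀ h : H, TensorProduct.map i i (HB.comul h) = AB.comul (i h)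
  i_counit : ∀ h : H, AB.counit (i h) = HB.counit h
  p_str : ∀ a : A, p (AB.str a) = CC.str (p a)
  p_comul : ∀ a : A, TensorProduct.map p p (AB.comul a) = CC.comul (p a)
  p_counit : ∀ a : A, CC.counit (p a) = AB.counit a
  j_mul : ∀ c d : C, j (CA.mul c d) = AB.mul (j c) (j d)
  j_one : j CA.one = AB.one
  j_str : ∀ c : C, j (CC.str c) = AB.str (j c)
  p_left_act : ∀ (h : H) (a : A),
    p (AB.mul (i ((HB.str ^ (-m)) h)) a) = HB.counit h • CC.str (p a)
  p_right_act : ∀ (a : A) (h : H),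
    p (AB.mul a (i ((HB.str ^ (-m)) h))) = HB.counit h • CC.str (p a)
  sigma_mod : ∃ σbar : H →ₗ[K] H →ₗ[K] A,
    IsLeftSigmaHomModule HB AB.mul AB.str.toLinearMap σbar
        (AB.mul ∘ₗ i ∘ₗ (HB.str ^ (-m)).toLinearMap)
      ∧ IsRightSigmaHomModule HB AB.mul AB.str.toLinearMap σbar
        (AB.mul.compl₂ (i ∘ₗ (HB.str ^ (-m)).toLinearMap))
  sub_l : ∀ c : C, ∃ y : H ⊗[K] C,
    TensorProduct.map ((HB.str ^ (-m)).toLinearMap ∘ₗ π) (LinearMap.id : A →ₗ[K] A)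
        (AB.comul (j c))
      = TensorProduct.map (LinearMap.id : H →ₗ[K] H) j y
  sub_r : ∀ c : C, ∃ z : C ⊗[K] H,
    TensorProduct.map (LinearMap.id : A →ₗ[K] A) ((HB.str ^ (-m)).toLinearMap ∘ₗ π)
        (AB.comul (j c))
      = TensorProduct.map j (LinearMap.id : H →ₗ[K] H) z
  p_col : ∀ c : C,
    TensorProduct.map (LinearMap.id : H →ₗ[K] H) p
        (TensorProduct.map ((HB.str ^ (-m)).toLinearMap ∘ₗ π) (LinearMap.id : A →ₗ[K] A)
          (AB.comul (j c)))
      = coact c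
  p_cor : ∀ c : C,
    TensorProduct.map p (LinearMap.id : H →ₗ[K] H)
        (TensorProduct.map (LinearMap.id : A →ₗ[K] A) ((HB.str ^ (-m)).toLinearMap ∘ₗ π)
          (AB.comul (j c)))
      = CC.str.symm c ⊗ₜ[K] HB.one
  split : ∀ a : A,
    TensorProduct.lift AB.mul (TensorProduct.map (j ∘ₗ p) (i ∘ₗ π) (AB.comul a)) = a

/-- The map `f : C ♯ H → A`, `c ⊗ h ↦ γ⁻¹(j(c)i(h))`. -/
def admF (AB : HomBialgebraStr K A) (j : C →ₗ[K] A) (i : H →ₗ[K] A) :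
    C ⊗[K] H →ₗ[K] A :=
  AB.str.symm.toLinearMap ∘ₗ TensorProduct.lift ((AB.mul ∘ₗ j).compl₂ i)

/-- The map `g : A → C ♯ H`, `a ↦ β(p(a₁)) ⊗ α(π(a₂))`. -/
def admG (HB : HomBialgebraStr K H) (CC : HomCoalgebraStr K C)
    (AB : HomBialgebraStr K A) (p : A →ₗ[K] C) (π : A →ₗ[K] H) :
    A →ₗ[K] C ⊗[K] H :=
  TensorProduct.map (CC.str.toLinearMap ∘ₗ p) (HB.str.toLinearMap ∘ₗ π) ∘ₗ AB.comul

end Defs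

/-! Since `H` acts on `1_A` through the counit, the product `(a ♯ h)(1_A ♯ g)` in `A ♯_σ^× H`
involves only `σ`. Applying `id ⊗ ε` to the unit axiom and to the multiplicativity of `β ⊗ α`
on such products shows that `σ(1, x) = ε(x)1` and `σ(αx, αy) = β σ(x, y)`. With these,
`φ^r(x ⊗ l)` is right multiplication by `1_A ♯ α^{-m}(l)`, so the module axiom is
Hom-associativity of the biproduct, and `φ^r(x ⊗ 1) = x(1_A ♯ 1_H)`. -/

namespace LinearEquiv

variable {R M N : Type*} [Semiring R] [AddCommMonoid M] [Module R M] [AddCommMonoid N]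
  [Module R N]

theorem zpow_apply_zpow (e : M ≃ₗ[R] M) (i j : ℤ) (x : M) :
    (e ^ i) ((e ^ j) x) = (e ^ (i + j)) x := by
  rw [zpow_add, mul_apply]

theorem apply_zpow_apply (e : M ≃ₗ[R] M) (j : ℤ) (x : M) : e ((e ^ j) x) = (e ^ (j + 1)) x := by
  rw [add_comm, zpow_add, zpow_one, mul_apply]

theorem zpow_apply_apply (e : M ≃ₗ[R] M) (j : ℤ) (x : M) : (e ^ j) (e x) = (e ^ (j + 1)) x := by
  rw [zpow_add_one, mul_apply]

theorem zpow_apply_symm_apply (e : M ≃ₗ[R] M) (j : ℤ) (x : M) :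
    (e ^ j) (e.symm x) = (e ^ (j - 1)) x := by
  rw [zpow_sub_one, mul_apply]
  rfl

theorem zpow_apply_of_apply_eq {e : M ≃ₗ[R] M} {x : M} (hx : e x = x) (j : ℤ) :
    (e ^ j) x = x := by
  have he : e ∈ MulAction.stabilizer (M ≃ₗ[R] M) x := hx
  exact zpow_mem he j

theorem map_zpow_apply_of_map_apply (g : M →ₗ[R] N) {e : M ≃ₗ[R] M} {e' : N ≃ₗ[R] N}
    (hg : ∀ x, g (e x) = e' (g x)) (j : ℤ) (x : M) : g ((e ^ j) x) = (e' ^ j) (g x) := by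
  have hg_symm : ∀ x, g (e.symm x) = e'.symm (g x) := fun x => by
    rw [← e'.symm_apply_apply (g (e.symm x)), ← hg, e.apply_symm_apply]
  induction j using Int.induction_on generalizing x with
  | zero => rfl
  | succ i ih => rw [zpow_add_one, zpow_add_one, mul_apply, mul_apply, ih, hg]
  | pred i ih =>
    rw [zpow_sub_one, zpow_sub_one, mul_apply, mul_apply, ih]
    exact congrArg _ (hg_symm x)

end LinearEquiv

theorem TensorProduct.tensorTensorTensorComm_map_tmul_map {R M N P Q M' N' P' Q' : Type*}
    [CommSemiring R] [AddCommMonoid M] [Module R M] [AddCommMonoid N] [Module R N]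
    [AddCommMonoid P] [Module R P] [AddCommMonoid Q] [Module R Q] [AddCommMonoid M']
    [Module R M'] [AddCommMonoid N'] [Module R N'] [AddCommMonoid P'] [Module R P']
    [AddCommMonoid Q'] [Module R Q'] (f : M →ₗ[R] M') (g : N →ₗ[R] N') (h : P →ₗ[R] P')
    (j : Q →ₗ[R] Q') (x : M ⊗[R] N) (y : P ⊗[R] Q) :
    tensorTensorTensorComm R M' N' P' Q' (map f g x ⊗ₜ map h j y)
      = map (map f h) (map g j) (tensorTensorTensorComm R M N P Q (x ⊗ₜ y)) :=
  LinearMap.congr_fun (tensorTensorTensorComm_comp_map R f g h j) (x ⊗ₜ y)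

namespace HomAlgebraStr

variable {K A : Type*} [Field K] [AddCommGroup A] [Module K A] (AA : HomAlgebraStr K A)

theorem str_zpow_one (j : ℤ) : (AA.str ^ j) AA.one = AA.one :=
  LinearEquiv.zpow_apply_of_apply_eq AA.str_one j

theorem mul_str_zpow (j : ℤ) (x y : A) :
    AA.mul ((AA.str ^ j) x) ((AA.str ^ j) y) = (AA.str ^ j) (AA.mul x y) := by
  have hmul : ∀ z, lift AA.mul (TensorProduct.congr AA.str AA.str z)
      = AA.str (lift AA.mul z) := fun z => by
    induction z using TensorProduct.induction_on <;> simp_all [AA.str_mul]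
  simpa using LinearEquiv.map_zpow_apply_of_map_apply _ hmul j (x ⊗ₜ y)

end HomAlgebraStr

namespace HomBialgebraStr

variable {K H M : Type*} [Field K] [AddCommGroup H] [Module K H] [AddCommGroup M] [Module K M]
variable (HB : HomBialgebraStr K H)

theorem counit_str_zpow (j : ℤ) (x : H) : HB.counit ((HB.str ^ j) x) = HB.counit x := by
  simpa using LinearEquiv.map_zpow_apply_of_map_apply HB.counit (e' := 1) HB.counit_str j x

theorem comul_str_zpow (j : ℤ) (x : H) :
    HB.comul ((HB.str ^ j) x)
      = map (HB.str ^ j).toLinearMap (HB.str ^ j).toLinearMap (HB.comul x) := by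
  rw [LinearEquiv.map_zpow_apply_of_map_apply HB.comul
    (e' := TensorProduct.congr HB.str HB.str) HB.comul_str j x, congr_zpow]
  rfl

theorem rid_map_counit_mul_tensorTensorTensorComm (F : H ⊗[K] H →ₗ[K] M) (x y : H) :
    TensorProduct.rid K M (map F (HB.counit ∘ₗ lift HB.mul)
        (tensorTensorTensorComm K H H H H (HB.comul x ⊗ₜ HB.comul y)))
      = F (HB.str.symm x ⊗ₜ HB.str.symm y) := by
  have hF : (TensorProduct.rid K M).toLinearMap ∘ₗ map F (HB.counit ∘ₗ lift HB.mul) ∘ₗ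
        (tensorTensorTensorComm K H H H H).toLinearMap
      = F ∘ₗ map ((TensorProduct.rid K H).toLinearMap ∘ₗ map LinearMap.id HB.counit)
          ((TensorProduct.rid K H).toLinearMap ∘ₗ map LinearMap.id HB.counit) :=
    ext_fourfold' fun _ _ _ _ => by
      simp [HB.counit_mul, ← smul_tmul', mul_smul]
      exact smul_comm _ _ _
  simpa [HB.counit_comul_right] using LinearMap.congr_fun hF (HB.comul x ⊗ₜ HB.comul y)

variable (M) in
def counitRight : M ⊗[K] H →ₗ[K] M :=
  (TensorProduct.rid K M).toLinearMap ∘ₗ HB.counit.lTensor M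

theorem counitRight_congr_str (f : M ≃ₗ[K] M) (z : M ⊗[K] H) :
    HB.counitRight M (TensorProduct.congr f HB.str z) = f (HB.counitRight M z) := by
  induction z using TensorProduct.induction_on with
  | zero => simp
  | tmul a h => simp [counitRight, HB.counit_str]
  | add z w hz hw => simp only [map_add, hz, hw]

end HomBialgebraStr

section Biproduct

variable {K H A : Type*} [Field K] [AddCommGroup H] [Module K H] [AddCommGroup A] [Module K A]
variable {HB : HomBialgebraStr K H} {AA : HomAlgebraStr K A} {act : H →ₗ[K] A →ₗ[K] A}

theorem cpMulElem_one_right (hact : IsWeakModuleAlgebra HB AA act) (σ : H →ₗ[K] H →ₗ[K] A)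
    (m k : ℤ) (a : A) (h g : H) :
    cpMulElem HB AA act σ m k a h AA.one g =
      map
        (AA.mul a ∘ₗ AA.str.toLinearMap ∘ₗ lift σ ∘ₗ
          map (HB.str ^ k).toLinearMap (HB.str ^ k).toLinearMap)
        (HB.str.toLinearMap ∘ₗ lift HB.mul)
        (tensorTensorTensorComm K H H H H (HB.comul h ⊗ₜ HB.comul g)) := by
  unfold cpMulElem
  rw [← LinearMap.comp_apply (map _ _), ← map_comp, LinearMap.comp_id]
  congr 2
  refine TensorProduct.ext' fun p r => ?_
  -- writing `α^k p = α^{k+1}(ε(p₁)p₂)` exposes `Δ p` on both sides, which may then be replaced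
  -- by an arbitrary tensor
  have hp : (HB.str ^ k) p = (HB.str ^ (k + 1))
      (TensorProduct.lid K H (map HB.counit LinearMap.id (HB.comul p))) := by
    rw [HB.counit_comul_left, LinearEquiv.zpow_apply_symm_apply, add_sub_cancel_right]
  simp only [LinearMap.comp_apply, map_tmul, lift.tmul, LinearEquiv.coe_coe, LinearMap.id_apply]
  rw [hp, AA.str_zpow_one]
  generalize HB.comul p = X
  induction X using TensorProduct.induction_on with
  | zero => simp
  | tmul x y => simp [hact.act_one, AA.one_mul, HB.counit_str_zpow]
  | add X Y hX hY => simp only [add_tmul, map_add, hX, hY, LinearMap.add_apply]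

theorem counitRight_cpMulElem_one_right (hact : IsWeakModuleAlgebra HB AA act)
    (σ : H →ₗ[K] H →ₗ[K] A) (m k : ℤ) (a : A) (h g : H) :
    HB.counitRight A (cpMulElem HB AA act σ m k a h AA.one g)
      = AA.mul a (AA.str (σ ((HB.str ^ (k - 1)) h) ((HB.str ^ (k - 1)) g))) := by
  have hcap : ∀ (F : H ⊗[K] H →ₗ[K] A) (G : H ⊗[K] H →ₗ[K] H),
      HB.counitRight A ∘ₗ map F (HB.str.toLinearMap ∘ₗ G)
        = (TensorProduct.rid K A).toLinearMap ∘ₗ map F (HB.counit ∘ₗ G) :=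
    fun F G => TensorProduct.ext' fun _ _ => by
      simp [HomBialgebraStr.counitRight, HB.counit_str]
  rw [cpMulElem_one_right hact, ← LinearMap.comp_apply (HB.counitRight A), hcap,
    LinearMap.comp_apply, LinearEquiv.coe_coe, HB.rid_map_counit_mul_tensorTensorTensorComm]
  simp [LinearEquiv.zpow_apply_symm_apply]

variable {AC : HomCoalgebraStr K A} {coact : A →ₗ[K] H ⊗[K] A} {σ : H →ₗ[K] H →ₗ[K] A} {m k : ℤ}
  {B : HomBialgebraStr K (A ⊗[K] H)}

namespace IsRadfordBiproduct

theorem sigma_one_left (hB : IsRadfordBiproduct HB AA AC act coact σ m k B)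
    (hact : IsWeakModuleAlgebra HB AA act) (x : H) : σ HB.one x = HB.counit x • AA.one := by
  have e := congrArg (HB.counitRight A) (B.one_mul (AA.one ⊗ₜ (HB.str ^ (1 - k)) x))
  rw [hB.one_def, hB.mul_def, counitRight_cpMulElem_one_right hact, hB.str_def,
    HB.counitRight_congr_str] at e
  simp [HomBialgebraStr.counitRight, HB.str_zpow_one, HB.counit_str_zpow, AA.one_mul,
    AA.str_one, LinearEquiv.zpow_apply_zpow] at e
  apply AA.str.injective
  apply AA.str.injective
  simpa [AA.str_one] using e

theorem sigma_str_str (hB : IsRadfordBiproduct HB AA AC act coact σ m k B)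
    (hact : IsWeakModuleAlgebra HB AA act) (x y : H) :
    σ (HB.str x) (HB.str y) = AA.str (σ x y) := by
  have e := congrArg (HB.counitRight A)
    (B.str_mul (AA.one ⊗ₜ (HB.str ^ (1 - k)) x) (AA.one ⊗ₜ (HB.str ^ (1 - k)) y))
  rw [hB.str_def, hB.mul_def, HB.counitRight_congr_str, counitRight_cpMulElem_one_right hact,
    congr_tmul, congr_tmul, AA.str_one, hB.mul_def,
    counitRight_cpMulElem_one_right hact] at e
  simpa [LinearEquiv.apply_zpow_apply, LinearEquiv.zpow_apply_zpow, AA.one_mul] using e.symm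

theorem mul_one_tmul (hB : IsRadfordBiproduct HB AA AC act coact σ m k B)
    (hact : IsWeakModuleAlgebra HB AA act) (a : A) (h g : H) :
    B.mul (a ⊗ₜ h) (AA.one ⊗ₜ g) =
      map
        (AA.mul a ∘ₗ lift σ ∘ₗ
          map (HB.str ^ (k + 1)).toLinearMap (HB.str ^ (k + 1)).toLinearMap)
        (HB.str.toLinearMap ∘ₗ lift HB.mul)
        (tensorTensorTensorComm K H H H H (HB.comul h ⊗ₜ HB.comul g)) := by
  rw [hB.mul_def, cpMulElem_one_right hact]
  congr 2
  refine TensorProduct.ext' fun p r => ?_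
  simp [← hB.sigma_str_str hact, LinearEquiv.apply_zpow_apply]

theorem tmul_one_mul_one_tmul (hB : IsRadfordBiproduct HB AA AC act coact σ m k B)
    (hact : IsWeakModuleAlgebra HB AA act) (a : A) (h : H) :
    B.mul (a ⊗ₜ HB.one) (AA.one ⊗ₜ h) = AA.str a ⊗ₜ HB.str h := by
  have hh : HB.str h = HB.str (HB.str
      (TensorProduct.lid K H (map HB.counit LinearMap.id (HB.comul h)))) := by
    rw [HB.counit_comul_left, LinearEquiv.apply_symm_apply]
  rw [hB.mul_def, cpMulElem_one_right hact, HB.comul_one, hh]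
  generalize HB.comul h = X
  induction X using TensorProduct.induction_on with
  | zero => simp
  | tmul x y => simp [hB.sigma_one_left hact, HB.str_zpow_one, HB.counit_str_zpow, AA.mul_one,
      AA.str_one, HB.one_mul, smul_tmul]
  | add X Y hX hY => simp only [tmul_add, map_add, hX, hY]

theorem phirElem_eq_mul (hB : IsRadfordBiproduct HB AA AC act coact σ m k B)
    (hact : IsWeakModuleAlgebra HB AA act) (a : A) (h l : H) :
    phirElem HB AA σ m k a h l = B.mul (a ⊗ₜ h) (AA.one ⊗ₜ (HB.str ^ (-m)) l) := by
  have htttc := tensorTensorTensorComm_map_tmul_map LinearMap.id LinearMap.id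
    (HB.str ^ (-m)).toLinearMap (HB.str ^ (-m)).toLinearMap (HB.comul h) (HB.comul l)
  rw [map_id, LinearMap.id_apply] at htttc
  rw [hB.mul_one_tmul hact, HB.comul_str_zpow, htttc,
    ← LinearMap.comp_apply (map _ _), ← map_comp]
  unfold phirElem
  congr 2
  all_goals refine TensorProduct.ext' fun p r => ?_
  all_goals simp only [LinearMap.comp_apply, map_tmul, lift.tmul,
    LinearEquiv.coe_coe, LinearMap.id_apply]
  · rw [LinearEquiv.zpow_apply_zpow, ← sub_eq_add_neg]
  · rw [HB.str_mul, LinearEquiv.apply_zpow_apply, neg_add_eq_sub]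

theorem one_tmul_zpow_mul_one_tmul_zpow (hB : IsRadfordBiproduct HB AA AC act coact σ m k B)
    (hact : IsWeakModuleAlgebra HB AA act) (h g : H) :
    B.mul (AA.one ⊗ₜ (HB.str ^ (-m)) h) (AA.one ⊗ₜ (HB.str ^ (-m)) g) =
      map
        (AA.str.toLinearMap ∘ₗ lift σ ∘ₗ
          map (HB.str ^ (k + 1 - m)).toLinearMap (HB.str ^ (k + 1 - m)).toLinearMap)
        ((HB.str ^ (1 - m)).toLinearMap ∘ₗ lift HB.mul)
        (tensorTensorTensorComm K H H H H (HB.comul h ⊗ₜ HB.comul g)) := by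
  rw [hB.mul_one_tmul hact, HB.comul_str_zpow, HB.comul_str_zpow,
    tensorTensorTensorComm_map_tmul_map,
    ← LinearMap.comp_apply (map _ _), ← map_comp]
  congr 2
  all_goals refine TensorProduct.ext' fun p r => ?_
  all_goals simp only [LinearMap.comp_apply, map_tmul, lift.tmul,
    LinearEquiv.coe_coe]
  · rw [AA.one_mul, LinearEquiv.zpow_apply_zpow, LinearEquiv.zpow_apply_zpow, ← sub_eq_add_neg]
  · rw [HB.mul_str_zpow, LinearEquiv.apply_zpow_apply, neg_add_eq_sub]

end IsRadfordBiproduct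

end Biproduct

theorem biproduct_right_sigma_module_general
    {K H A : Type*} [Field K] [AddCommGroup H] [Module K H] [AddCommGroup A] [Module K A]
    (HB : HomBialgebraStr K H) (AA : HomAlgebraStr K A) (AC : HomCoalgebraStr K A)
    (act : H →ₗ[K] A →ₗ[K] A) (hact : IsWeakModuleAlgebra HB AA act)
    (coact : A →ₗ[K] H ⊗[K] A)
    (σ : H →ₗ[K] H →ₗ[K] A)
    (m k : ℤ)
    (B : HomBialgebraStr K (A ⊗[K] H))
    (hB : IsRadfordBiproduct HB AA AC act coact σ m k B)
    (φr : (A ⊗[K] H) →ₗ[K] H →ₗ[K] (A ⊗[K] H))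
    (hφr : ∀ (a : A) (h : H) (l : H), φr (a ⊗ₜ[K] h) l = phirElem HB AA σ m k a h l)
    (σbar : H →ₗ[K] H →ₗ[K] A ⊗[K] H)
    (hσbar : ∀ h l : H,
      σbar h l = σ ((HB.str ^ (k+1-m)) h) ((HB.str ^ (k+1-m)) l) ⊗ₜ[K] HB.one) :
    IsRightSigmaHomModule HB B.mul
      (TensorProduct.map AA.str.toLinearMap HB.str.toLinearMap) σbar φr := by
  have hφ : ∀ x l, φr x l = B.mul x (AA.one ⊗ₜ (HB.str ^ (-m)) l) := fun x l => by
    induction x using TensorProduct.induction_on with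
    | zero => simp
    | tmul a h => rw [hφr, hB.phirElem_eq_mul hact]
    | add x y hx hy => simp only [map_add, LinearMap.add_apply, hx, hy]
  have hφσbar : lift φr ∘ₗ map (lift σbar) (lift HB.mul)
      = map (AA.str.toLinearMap ∘ₗ lift σ ∘ₗ
            map (HB.str ^ (k + 1 - m)).toLinearMap (HB.str ^ (k + 1 - m)).toLinearMap)
          ((HB.str ^ (1 - m)).toLinearMap ∘ₗ lift HB.mul) :=
    ext_fourfold' fun p q r s => by
      simp only [LinearMap.comp_apply, map_tmul, lift.tmul, LinearEquiv.coe_coe, hσbar, hφ,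
        hB.tmul_one_mul_one_tmul hact, LinearEquiv.apply_zpow_apply, neg_add_eq_sub]
  refine ⟨fun x l g => ?_, fun x => ?_⟩
  · have hg : AA.one ⊗ₜ (HB.str ^ (-m)) (HB.str g) = B.str (AA.one ⊗ₜ (HB.str ^ (-m)) g) := by
      rw [hB.str_def, congr_tmul, AA.str_one, LinearEquiv.apply_zpow_apply,
        LinearEquiv.zpow_apply_apply]
    rw [hφ, hφ, hg, ← B.hom_assoc, hB.one_tmul_zpow_mul_one_tmul_zpow hact,
      ← LinearMap.comp_apply (lift φr), hφσbar, hB.str_def]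
    rfl
  · rw [hφ, HB.str_zpow_one, ← hB.one_def, B.mul_one, hB.str_def]
    rfl

/-- Lemma 4.8: `(A ♯_σ^× H, β ⊗ α, φ^r)` is a right `(H, α, σ̄)`-Hom module. -/
theorem biproduct_right_sigma_module
    {K H A : Type*} [Field K] [AddCommGroup H] [Module K H] [AddCommGroup A] [Module K A]
    (HB : HomBialgebraStr K H) (AA : HomAlgebraStr K A) (AC : HomCoalgebraStr K A)
    (act : H →ₗ[K] A →ₗ[K] A) (hact : IsWeakModuleAlgebra HB AA act)
    (coact : A →ₗ[K] H ⊗[K] A) (hcc : IsComoduleCoalgebra HB AC coact)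
    (σ σinv : H →ₗ[K] H →ₗ[K] A)
    (hconv : IsConvInvPair HB AA σ σinv) (m k : ℤ)
    (B : HomBialgebraStr K (A ⊗[K] H))
    (hB : IsRadfordBiproduct HB AA AC act coact σ m k B)
    (φr : (A ⊗[K] H) →ₗ[K] H →ₗ[K] (A ⊗[K] H))
    (hφr : ∀ (a : A) (h : H) (l : H), φr (a ⊗ₜ[K] h) l = phirElem HB AA σ m k a h l)
    (σbar : H →ₗ[K] H →ₗ[K] A ⊗[K] H)
    (hσbar : ∀ h l : H,
      σbar h l = σ ((HB.str ^ (k+1-m)) h) ((HB.str ^ (k+1-m)) l) ⊗ₜ[K] HB.one) :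
    IsRightSigmaHomModule HB B.mul
      (TensorProduct.map AA.str.toLinearMap HB.str.toLinearMap) σbar φr :=
  biproduct_right_sigma_module_general HB AA AC act hact coact σ m k B hB φr hφr σbar hσbar
end
end

section
/- Let C ⇄ A ⇄ H (with maps j, p, i, π) be a weak m-Hom admissible mapping system, with (C ♯_σ^× H, β ⊗ α) the Radford [(m,k),m]-biproduct monoidal Hom-bialgebra and (A, γ) a monoidal Hom-bialgebra. Define f: C ♯_σ^× H → A by f(c ⊗ h) = γ⁻¹(j(c)i(h)) and g: A → C ♯_σ^× H by g(a) = β(p(a₁)) ⊗ α(π(a₂)). Then f∘(β ⊗ α) = γ∘f, g∘γ = (β ⊗ α)∘g, f∘g = id_A, and g∘f = id_{C ♯_σ^× H}. -/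
open TensorProduct

noncomputable section

/-! `f` and `g` commute with the structure maps because `j`, `i`, `p`, `π` do, and `f ∘ g = id`
is the splitting `j(p(a₁)) i(π(a₂)) = a`. For `g ∘ f`, write
`Δ(j(c) i(h)) = j(c)₁ i(h₁) ⊗ j(c)₂ i(h₂)`: `p` turns the right factor `i(h₁)` into `ε(h₁)` and
`π` is multiplicative, so `g(f(c ⊗ h)) = β(p(j(c)₁)) ⊗ π(j(c)₂) α⁻¹(h)`; since `p` is a right
comodule map on `j(C)`, `p(j(c)₁) ⊗ π(j(c)₂) = β⁻¹(c) ⊗ 1`. -/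

section Automorphisms

variable {R M N : Type*} [Semiring R] [AddCommMonoid M] [Module R M] [AddCommMonoid N]
  [Module R N]

theorem LinearEquiv.zpow_apply_of_apply_eq_s15 {e : M ≃ₗ[R] M} {q : M} (hq : e q = q) (n : ℤ) :
    (e ^ n) q = q :=
  Subgroup.zpow_mem (MulAction.stabilizer (M ≃ₗ[R] M) q) (x := e) hq n

theorem LinearMap.apply_zpow_apply_of_invariant {f : M →ₗ[R] N} {e : M ≃ₗ[R] M}
    (hf : ∀ x, f (e x) = f x) (n : ℤ) (x : M) : f ((e ^ n) x) = f x := by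
  refine zpow_induction_left (P := fun a : M ≃ₗ[R] M => ∀ x, f (a x) = f x) (fun _ => rfl)
    (fun a ih x => ?_) (fun a ih x => ?_) n x
  · rw [LinearEquiv.mul_apply, hf, ih]
  · rw [LinearEquiv.mul_apply, LinearEquiv.coe_inv, ← hf, LinearEquiv.apply_symm_apply, ih]

end Automorphisms

section AdmissibleMaps

variable {K C H A : Type*} [Field K] [AddCommGroup C] [Module K C] [AddCommGroup H] [Module K H]
  [AddCommGroup A] [Module K A]

theorem HomBialgebraStr.comul_comp_str (AB : HomBialgebraStr K A) :
    AB.comul ∘ₗ AB.str.toLinearMap = map AB.str.toLinearMap AB.str.toLinearMap ∘ₗ AB.comul :=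
  LinearMap.ext AB.comul_str

theorem admF_tmul (AB : HomBialgebraStr K A) (j : C →ₗ[K] A) (i : H →ₗ[K] A) (c : C) (h : H) :
    admF AB j i (c ⊗ₜ h) = AB.str.symm (AB.mul (j c) (i h)) :=
  rfl

theorem admF_comp_map {AB : HomBialgebraStr K A} {j : C →ₗ[K] A} {i : H →ₗ[K] A}
    {β : C →ₗ[K] C} {α : H →ₗ[K] H} (hj : ∀ c, j (β c) = AB.str (j c))
    (hi : ∀ h, i (α h) = AB.str (i h)) :
    admF AB j i ∘ₗ map β α = AB.str.toLinearMap ∘ₗ admF AB j i := by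
  ext c h
  simp [admF_tmul, hj, hi, ← AB.str_mul]

theorem admG_comp_str {HB : HomBialgebraStr K H} {CC : HomCoalgebraStr K C}
    {AB : HomBialgebraStr K A} {p : A →ₗ[K] C} {π : A →ₗ[K] H}
    (hp : ∀ a, p (AB.str a) = CC.str (p a)) (hπ : ∀ a, π (AB.str a) = HB.str (π a)) :
    admG HB CC AB p π ∘ₗ AB.str.toLinearMap
      = map CC.str.toLinearMap HB.str.toLinearMap ∘ₗ admG HB CC AB p π := by
  have hmap : map (CC.str.toLinearMap ∘ₗ p) (HB.str.toLinearMap ∘ₗ π)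
        ∘ₗ map AB.str.toLinearMap AB.str.toLinearMap
      = map CC.str.toLinearMap HB.str.toLinearMap
        ∘ₗ map (CC.str.toLinearMap ∘ₗ p) (HB.str.toLinearMap ∘ₗ π) := by
    ext a b
    simp [hp, hπ]
  rw [admG, LinearMap.comp_assoc, AB.comul_comp_str, ← LinearMap.comp_assoc, hmap,
    LinearMap.comp_assoc]

theorem admG_str_symm {HB : HomBialgebraStr K H} {CC : HomCoalgebraStr K C}
    {AB : HomBialgebraStr K A} {p : A →ₗ[K] C} {π : A →ₗ[K] H}
    (hp : ∀ a, p (AB.str a) = CC.str (p a)) (hπ : ∀ a, π (AB.str a) = HB.str (π a)) (a : A) :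
    admG HB CC AB p π (AB.str.symm a) = map p π (AB.comul a) := by
  have hmap : map p π ∘ₗ map AB.str.toLinearMap AB.str.toLinearMap
      = map (CC.str.toLinearMap ∘ₗ p) (HB.str.toLinearMap ∘ₗ π) := by
    ext x y
    simp [hp, hπ]
  conv_rhs => rw [← AB.str.apply_symm_apply a, AB.comul_str, ← LinearMap.comp_apply, hmap]
  rfl

theorem admF_admG {HB : HomBialgebraStr K H} {CC : HomCoalgebraStr K C}
    {AB : HomBialgebraStr K A} {j : C →ₗ[K] A} {p : A →ₗ[K] C} {i : H →ₗ[K] A} {π : A →ₗ[K] H}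
    (hj : ∀ c, j (CC.str c) = AB.str (j c)) (hi : ∀ h, i (HB.str h) = AB.str (i h))
    (hsplit : ∀ a, lift AB.mul (map (j ∘ₗ p) (i ∘ₗ π) (AB.comul a)) = a) (a : A) :
    admF AB j i (admG HB CC AB p π a) = a := by
  have hlift : lift ((AB.mul ∘ₗ j).compl₂ i)
        ∘ₗ map (CC.str.toLinearMap ∘ₗ p) (HB.str.toLinearMap ∘ₗ π)
      = AB.str.toLinearMap ∘ₗ lift AB.mul ∘ₗ map (j ∘ₗ p) (i ∘ₗ π) := by
    ext x y
    simp [hj, hi, AB.str_mul]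
  calc admF AB j i (admG HB CC AB p π a)
      = AB.str.symm (AB.str (lift AB.mul (map (j ∘ₗ p) (i ∘ₗ π) (AB.comul a)))) :=
        congrArg AB.str.symm (LinearMap.congr_fun hlift (AB.comul a))
    _ = a := by rw [LinearEquiv.symm_apply_apply, hsplit]

theorem map_tensorSquareMul_map_comul {HB : HomBialgebraStr K H} {AB : HomBialgebraStr K A}
    {p : A →ₗ[K] C} {π : A →ₗ[K] H} {i : H →ₗ[K] A} {β : C →ₗ[K] C}
    (hpi : ∀ a g, p (AB.mul a (i g)) = HB.counit g • β (p a))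
    (hπ_mul : ∀ a b, π (AB.mul a b) = HB.mul (π a) (π b)) (hπ_i : ∀ h, π (i h) = h)
    (x : A ⊗[K] A) (h : H) :
    map p π (tensorSquareMul AB.mul x (map i i (HB.comul h)))
      = map (β ∘ₗ p) (HB.mul.flip (HB.str.symm h) ∘ₗ π) x := by
  induction x using TensorProduct.induction_on with
  | zero => simp
  | add x y hx hy => simp only [map_add, LinearMap.add_apply, hx, hy]
  | tmul u v =>
    have hcomul : map p π ∘ₗ tensorSquareMul AB.mul (u ⊗ₜ v) ∘ₗ map i i
        = (mk K C H (β (p u)) ∘ₗ HB.mul (π v)) ∘ₗ (TensorProduct.lid K H).toLinearMap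
          ∘ₗ map HB.counit LinearMap.id := by
      ext g₁ g₂
      simp [tensorSquareMul, hpi, hπ_mul, hπ_i, TensorProduct.smul_tmul]
    have hΔh := LinearMap.congr_fun hcomul (HB.comul h)
    simp only [LinearMap.comp_apply, LinearEquiv.coe_coe, HB.counit_comul_left] at hΔh
    simpa using hΔh

end AdmissibleMaps

namespace WeakAdmissibleSystem

variable {K C H A : Type*} [Field K] [AddCommGroup C] [Module K C] [AddCommGroup H] [Module K H]
  [AddCommGroup A] [Module K A] {HB : HomBialgebraStr K H} {CA : HomAlgebraStr K C}
  {CC : HomCoalgebraStr K C} {coact : C →ₗ[K] H ⊗[K] C} {m : ℤ} {AB : HomBialgebraStr K A}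
  {j : C →ₗ[K] A} {p : A →ₗ[K] C} {i : H →ₗ[K] A} {π : A →ₗ[K] H}

theorem p_mul_i (sys : WeakAdmissibleSystem HB CA CC coact m AB j p i π) (a : A) (g : H) :
    p (AB.mul a (i g)) = HB.counit g • CC.str (p a) := by
  simpa [zpow_neg, LinearMap.apply_zpow_apply_of_invariant HB.counit_str]
    using sys.p_right_act a ((HB.str ^ m) g)

theorem map_p_π_comul_j (sys : WeakAdmissibleSystem HB CA CC coact m AB j p i π) (c : C) :
    map p π (AB.comul (j c)) = CC.str.symm c ⊗ₜ HB.one := by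
  have hfactor : map p π = map LinearMap.id (HB.str ^ m).toLinearMap ∘ₗ map p LinearMap.id
      ∘ₗ map LinearMap.id ((HB.str ^ (-m)).toLinearMap ∘ₗ π) := by
    ext x
    simp [zpow_neg]
  rw [hfactor, LinearMap.comp_apply, LinearMap.comp_apply, sys.p_cor, map_tmul,
    LinearMap.id_apply, LinearEquiv.coe_coe, LinearEquiv.zpow_apply_of_apply_eq_s15 HB.str_one]

theorem admG_admF (sys : WeakAdmissibleSystem HB CA CC coact m AB j p i π) (x : C ⊗[K] H) :
    admG HB CC AB p π (admF AB j i x) = x := by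
  induction x using TensorProduct.induction_on with
  | zero => simp
  | add x y hx hy => simp only [map_add, hx, hy]
  | tmul c h =>
    rw [admF_tmul, admG_str_symm sys.p_str sys.pi_str, AB.comul_mul, ← sys.i_comul,
      map_tensorSquareMul_map_comul (β := CC.str.toLinearMap) sys.p_mul_i sys.pi_mul sys.pi_i,
      map_comp, LinearMap.comp_apply, sys.map_p_π_comul_j]
    simp [HB.one_mul]

end WeakAdmissibleSystem

theorem admissible_system_f_g_inverse_general
    {K C H A : Type*} [Field K] [AddCommGroup C] [Module K C] [AddCommGroup H] [Module K H]
    [AddCommGroup A] [Module K A]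
    (HB : HomBialgebraStr K H) (CA : HomAlgebraStr K C) (CC : HomCoalgebraStr K C)
    (coact : C →ₗ[K] H ⊗[K] C)
    (m : ℤ)
    (AB : HomBialgebraStr K A)
    (j : C →ₗ[K] A) (p : A →ₗ[K] C) (i : H →ₗ[K] A) (π : A →ₗ[K] H)
    (sys : WeakAdmissibleSystem HB CA CC coact m AB j p i π) :
    (∀ x : C ⊗[K] H,
      admF AB j i (TensorProduct.map CC.str.toLinearMap HB.str.toLinearMap x)
        = AB.str (admF AB j i x))
    ∧ (∀ a : A,
      admG HB CC AB p π (AB.str a)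
        = TensorProduct.map CC.str.toLinearMap HB.str.toLinearMap (admG HB CC AB p π a))
    ∧ (∀ a : A, admF AB j i (admG HB CC AB p π a) = a)
    ∧ (∀ x : C ⊗[K] H, admG HB CC AB p π (admF AB j i x) = x) :=
  ⟨LinearMap.congr_fun (admF_comp_map sys.j_str sys.i_str),
    LinearMap.congr_fun (admG_comp_str sys.p_str sys.pi_str),
    admF_admG sys.j_str sys.i_str sys.split, sys.admG_admF⟩

/-- The first part of the proof of Theorem 4.11: `f` and `g` intertwine the structure maps
and are mutually inverse. -/
theorem admissible_system_f_g_inverse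
    {K C H A : Type*} [Field K] [AddCommGroup C] [Module K C] [AddCommGroup H] [Module K H]
    [AddCommGroup A] [Module K A]
    (HB : HomBialgebraStr K H) (CA : HomAlgebraStr K C) (CC : HomCoalgebraStr K C)
    (act : H →ₗ[K] C →ₗ[K] C) (hact : IsWeakModuleAlgebra HB CA act)
    (coact : C →ₗ[K] H ⊗[K] C) (hcc : IsComoduleCoalgebra HB CC coact)
    (σ : H →ₗ[K] H →ₗ[K] C) (m k : ℤ)
    (B : HomBialgebraStr K (C ⊗[K] H))
    (hB : IsRadfordBiproduct HB CA CC act coact σ m k B)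
    (AB : HomBialgebraStr K A)
    (j : C →ₗ[K] A) (p : A →ₗ[K] C) (i : H →ₗ[K] A) (π : A →ₗ[K] H)
    (sys : WeakAdmissibleSystem HB CA CC coact m AB j p i π) :
    (∀ x : C ⊗[K] H,
      admF AB j i (TensorProduct.map CC.str.toLinearMap HB.str.toLinearMap x)
        = AB.str (admF AB j i x))
    ∧ (∀ a : A,
      admG HB CC AB p π (AB.str a)
        = TensorProduct.map CC.str.toLinearMap HB.str.toLinearMap (admG HB CC AB p π a))
    ∧ (∀ a : A, admF AB j i (admG HB CC AB p π a) = a)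
    ∧ (∀ x : C ⊗[K] H, admG HB CC AB p π (admF AB j i x) = x) :=
  admissible_system_f_g_inverse_general HB CA CC coact m AB j p i π sys
end
end

section
/- Let C ⇄ A ⇄ H (with maps j, p, i, π) be a weak m-Hom admissible mapping system with (A, γ) a monoidal Hom-bialgebra. Then for all h ∈ H and b ∈ C: i(h)·j(b) = j(p(i(h₁)·j(β⁻¹(b)))) · i(α(h₂)). -/
open TensorProduct

noncomputable section

/-! Split `a = i(h)·j(b)` as `j(p(a₁))·i(π(a₂))`. Since `Δ` and `π` are multiplicative and
`π ∘ i = id`, the second legs contribute `h₂·π(j(b)₂)`, and the sub-bicomodule condition on `j(C)`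
gives `(id ⊗ π)Δ(j b) = j(β⁻¹ b) ⊗ 1`; finally `h₂·1 = α(h₂)`. -/

theorem LinearEquiv.zpow_apply_eq_self_of_apply_eq_self {R M : Type*} [Semiring R]
    [AddCommMonoid M] [Module R M] {e : M ≃ₗ[R] M} {x : M} (hx : e x = x) (n : ℤ) :
    (e ^ n) x = x :=
  (MulAction.stabilizer (M ≃ₗ[R] M) x).zpow_mem (show e • x = x from hx) n

namespace WeakAdmissibleSystem

variable {K C H A : Type*} [Field K] [AddCommGroup C] [Module K C] [AddCommGroup H] [Module K H]
    [AddCommGroup A] [Module K A]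
    {HB : HomBialgebraStr K H} {CA : HomAlgebraStr K C} {CC : HomCoalgebraStr K C}
    {coact : C →ₗ[K] H ⊗[K] C} {m : ℤ} {AB : HomBialgebraStr K A}
    {j : C →ₗ[K] A} {p : A →ₗ[K] C} {i : H →ₗ[K] A} {π : A →ₗ[K] H}
    (sys : WeakAdmissibleSystem HB CA CC coact m AB j p i π)
include sys

theorem map_p_map_j (w : C ⊗[K] H) :
    map p LinearMap.id (map j (LinearMap.id : H →ₗ[K] H) w) = w := by
  have hpj : p ∘ₗ j = LinearMap.id := LinearMap.ext sys.p_j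
  rw [map_map, hpj, LinearMap.id_comp, map_id, LinearMap.id_apply]

theorem map_id_pi_comul_j (b : C) :
    map LinearMap.id π (AB.comul (j b)) = j (CC.str.symm b) ⊗ₜ[K] HB.one := by
  -- `j(C)` is a right sub-comodule, and `p` (a left inverse of `j`) identifies the coaction on it.
  obtain ⟨z, hz⟩ := sys.sub_r b
  have hz_eq : z = CC.str.symm b ⊗ₜ[K] HB.one := by
    rw [← sys.p_cor b, hz, sys.map_p_map_j]
  have hπ : π = (HB.str ^ m).toLinearMap ∘ₗ (HB.str ^ (-m)).toLinearMap ∘ₗ π := by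
    ext a; simp [zpow_neg]
  rw [hπ, ← LinearMap.comp_id (LinearMap.id : A →ₗ[K] A), ← map_map, hz, hz_eq]
  simp [LinearEquiv.zpow_apply_eq_self_of_apply_eq_self HB.str_one]

theorem pi_mul_i (h : H) (a : A) : π (AB.mul (i h) a) = HB.mul h (π a) := by
  rw [sys.pi_mul, sys.pi_i]

theorem lift_mul_map_tensorSquareMul_tmul (h₁ h₂ : H) (T : A ⊗[K] A) :
    lift AB.mul (map (j ∘ₗ p) (i ∘ₗ π) (tensorSquareMul AB.mul (i h₁ ⊗ₜ[K] i h₂) T))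
      = lift ((AB.mul ∘ₗ j ∘ₗ p ∘ₗ AB.mul (i h₁)).compl₂ (i ∘ₗ HB.mul h₂))
          (map LinearMap.id π T) := by
  induction T using TensorProduct.induction_on with
  | zero => simp
  | tmul a b => simp [tensorSquareMul, sys.pi_mul_i]
  | add T T' hT hT' => simp only [map_add, hT, hT']

theorem lift_mul_map_tensorSquareMul_map_i {T : A ⊗[K] A} {x : A} {g : H}
    (hT : map LinearMap.id π T = x ⊗ₜ[K] g) (t : H ⊗[K] H) :
    lift AB.mul (map (j ∘ₗ p) (i ∘ₗ π) (tensorSquareMul AB.mul (map i i t) T))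
      = lift ((AB.mul ∘ₗ (j ∘ₗ p ∘ₗ AB.mul.flip x ∘ₗ i)).compl₂ (i ∘ₗ HB.mul.flip g)) t := by
  induction t using TensorProduct.induction_on with
  | zero => simp
  | tmul h₁ h₂ => simp [sys.lift_mul_map_tensorSquareMul_tmul, hT]
  | add t t' ht ht' => simp only [map_add, LinearMap.add_apply, ht, ht']

end WeakAdmissibleSystem

/-- The key identity `i(h)·j(b) = j(p(i(h₁)·j(β⁻¹(b)))) · i(α(h₂))` in the proof of
Theorem 4.11. -/
theorem admissible_system_i_j_exchange
    {K C H A : Type*} [Field K] [AddCommGroup C] [Module K C] [AddCommGroup H] [Module K H]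
    [AddCommGroup A] [Module K A]
    (HB : HomBialgebraStr K H) (CA : HomAlgebraStr K C) (CC : HomCoalgebraStr K C)
    (coact : C →ₗ[K] H ⊗[K] C) (m : ℤ)
    (AB : HomBialgebraStr K A)
    (j : C →ₗ[K] A) (p : A →ₗ[K] C) (i : H →ₗ[K] A) (π : A →ₗ[K] H)
    (sys : WeakAdmissibleSystem HB CA CC coact m AB j p i π) :
    ∀ (h : H) (b : C),
      AB.mul (i h) (j b)
        = TensorProduct.lift
            ((AB.mul ∘ₗ (j ∘ₗ p ∘ₗ (AB.mul.flip (j (CC.str.symm b))) ∘ₗ i)).compl₂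
              (i ∘ₗ HB.str.toLinearMap))
            (HB.comul h) := by
  intro h b
  have hα : HB.mul.flip HB.one = HB.str.toLinearMap := LinearMap.ext HB.mul_one
  conv_lhs => rw [← sys.split (AB.mul (i h) (j b)), AB.comul_mul, ← sys.i_comul]
  rw [sys.lift_mul_map_tensorSquareMul_map_i (sys.map_id_pi_comul_j b), hα]
end
end
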